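/- arXiv:2304.08734 — 2 statements merged into one kernel-verified Lean document; each statement's English description precedes it below -/
import Mathlib

section
/- For every integer m ≥ 1, the (m+1)×(m+1) tridiagonal matrix T^m with diagonal entries T^m_{ll} = (l+1)(m+1) for 0 ≤ l ≤ m−1 and T^m_{mm} = (m+1)², superdiagonal entries T^m_{l,l+1} = (l+1)(l+2) for 0 ≤ l ≤ m−1, and subdiagonal entries T^m_{l,l−1} = m(m+2)/4 for 1 ≤ l ≤ m, is invertible. -/
/-!
The corner entry `(m+1)²` is the `l = m` instance of the diagonal `(l+1)(m+1)`, so with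
`p = (m+2)/2` and `q = m/2` the matrix is tridiagonal with diagonal `(l+1)(p+q)`, constant
subdiagonal `pq` and superdiagonal `(l+1)(l+2)`. Gaussian elimination without pivoting then
factors it as a unit lower bidiagonal times an upper bidiagonal matrix whose pivots are
`u_l = (l+1) F_{l+1} / F_l` with `F_k = p^{k+1} - q^{k+1}`; the pivot recurrence is the
three-term recurrence `F_{k+2} = (p+q) F_{k+1} - pq F_k`. For `0 ≤ q < p` the pivots are positive
and telescope, so `det Tᵐ = (m+1)! ((m+2)^{m+2} - m^{m+2}) / 2^{m+2} > 0`.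
-/
namespace Matrix

variable {K : Type*} [Field K]

def tridiagonal (n : ℕ) (a b c : ℕ → K) : Matrix (Fin n) (Fin n) K :=
  of fun i j =>
    if (i : ℕ) = j then a i
    else if (j : ℕ) = i + 1 then c i
    else if (i : ℕ) = j + 1 then b j
    else 0

def lowerBidiagonal (n : ℕ) (d s : ℕ → K) : Matrix (Fin n) (Fin n) K :=
  of fun i j => if (i : ℕ) = j then d i else if (i : ℕ) = j + 1 then s j else 0

def upperBidiagonal (n : ℕ) (d s : ℕ → K) : Matrix (Fin n) (Fin n) K :=
  of fun i j => if (i : ℕ) = j then d i else if (j : ℕ) = i + 1 then s i else 0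

theorem det_lowerBidiagonal (n : ℕ) (d s : ℕ → K) :
    (lowerBidiagonal n d s).det = ∏ i : Fin n, d i := by
  refine (det_of_isLowerTriangular _ fun i j hij => ?_).trans ?_
  · have : (i : ℕ) < j := hij
    simp only [lowerBidiagonal, of_apply]
    rw [if_neg (by omega), if_neg (by omega)]
  · simp [lowerBidiagonal]

theorem det_upperBidiagonal (n : ℕ) (d s : ℕ → K) :
    (upperBidiagonal n d s).det = ∏ i : Fin n, d i := by
  refine (det_of_isUpperTriangular fun i j hij => ?_).trans ?_
  · have : (j : ℕ) < i := hij
    simp only [upperBidiagonal, of_apply]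
    rw [if_neg (by omega), if_neg (by omega)]
  · simp [upperBidiagonal]

theorem lowerBidiagonal_mul_apply_zero {n : ℕ} (d s : ℕ → K)
    (M : Matrix (Fin (n + 1)) (Fin (n + 1)) K) (j : Fin (n + 1)) :
    (lowerBidiagonal (n + 1) d s * M) 0 j = d 0 * M 0 j := by
  rw [mul_apply, Fintype.sum_eq_single 0 fun k hk => ?_]
  · simp only [lowerBidiagonal, of_apply, if_true]
    rfl
  · have hk' : (k : ℕ) ≠ 0 := fun h => hk (Fin.ext h)
    simp only [lowerBidiagonal, of_apply]
    rw [if_neg (by simpa using hk'.symm), if_neg (by simp), zero_mul]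

theorem lowerBidiagonal_mul_apply_succ {n : ℕ} (d s : ℕ → K)
    (M : Matrix (Fin (n + 1)) (Fin (n + 1)) K) (i : Fin n) (j : Fin (n + 1)) :
    (lowerBidiagonal (n + 1) d s * M) i.succ j = s i * M i.castSucc j + d (i + 1) * M i.succ j := by
  rw [mul_apply, Fintype.sum_eq_add i.castSucc i.succ (Fin.castSucc_lt_succ).ne fun k hk => ?_]
  · simp [lowerBidiagonal]
  · obtain ⟨h₁, h₂⟩ := hk
    rw [Ne, Fin.ext_iff] at h₁ h₂
    simp only [lowerBidiagonal, of_apply, Fin.val_succ, Fin.val_castSucc] at h₁ h₂ ⊢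
    rw [if_neg (by omega), if_neg (by omega), zero_mul]

theorem tridiagonal_eq_lowerBidiagonal_mul_upperBidiagonal {n : ℕ} {a b c u : ℕ → K}
    (hu : ∀ l, u l ≠ 0) (h₀ : u 0 = a 0)
    (hsucc : ∀ l, b l / u l * c l + u (l + 1) = a (l + 1)) :
    tridiagonal n a b c = lowerBidiagonal n 1 (fun l => b l / u l) * upperBidiagonal n u c := by
  rcases n with _ | n
  · exact Subsingleton.elim _ _
  ext i j
  induction i using Fin.cases with
  | zero =>
    rw [lowerBidiagonal_mul_apply_zero]
    simp only [tridiagonal, upperBidiagonal, of_apply, Fin.val_zero, Pi.one_apply, one_mul]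
    split_ifs <;> first | omega | simp_all
  | succ i =>
    rw [lowerBidiagonal_mul_apply_succ]
    simp only [tridiagonal, upperBidiagonal, of_apply, Fin.val_succ, Fin.val_castSucc,
      Pi.one_apply, one_mul]
    split_ifs <;> try omega
    · exact (hsucc i).symm
    · rw [mul_zero, zero_add]
    · rw [div_mul_cancel₀ _ (hu i), add_zero, show (j : ℕ) = i by omega]
    · rw [mul_zero, add_zero]

theorem det_tridiagonal {n : ℕ} {a b c u : ℕ → K}
    (hu : ∀ l, u l ≠ 0) (h₀ : u 0 = a 0)
    (hsucc : ∀ l, b l / u l * c l + u (l + 1) = a (l + 1)) :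
    (tridiagonal n a b c).det = ∏ i : Fin n, u i := by
  rw [tridiagonal_eq_lowerBidiagonal_mul_upperBidiagonal hu h₀ hsucc, det_mul,
    det_lowerBidiagonal, det_upperBidiagonal]
  simp

end Matrix

open Matrix
open scoped Nat

theorem det_tridiagonal_eq {p q : ℝ} (hq : 0 ≤ q) (hqp : q < p) (n : ℕ) :
    (tridiagonal n (fun l => (l + 1) * (p + q)) (fun _ => p * q) (fun l => (l + 1) * (l + 2))).det
      = n ! * (p ^ (n + 1) - q ^ (n + 1)) / (p - q) := by
  set F : ℕ → ℝ := fun k => p ^ (k + 1) - q ^ (k + 1) with hF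
  have hFpos (k : ℕ) : 0 < F k := sub_pos.mpr (pow_lt_pow_left₀ hqp hq k.succ_ne_zero)
  have hFrec (k : ℕ) : F (k + 2) = (p + q) * F (k + 1) - p * q * F k := by simp only [hF]; ring
  rw [det_tridiagonal (u := fun l => (l + 1) * F (l + 1) / F l)]
  · rw [Fin.prod_univ_eq_prod_range (fun l : ℕ => ((l : ℝ) + 1) * F (l + 1) / F l)]
    have hF0 : F 0 = p - q := by simp only [hF]; ring
    rw [← hF0]
    induction n with
    | zero =>
      rw [Finset.prod_range_zero, Nat.factorial_zero, Nat.cast_one, one_mul,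
        div_self (hFpos 0).ne']
    | succ n ih =>
      rw [Finset.prod_range_succ, ih, Nat.factorial_succ]
      field_simp [(hFpos 0).ne', (hFpos n).ne']
      push_cast
      ring
  · intro l
    have := hFpos l
    have := hFpos (l + 1)
    positivity
  · simp only [hF]
    field_simp [sub_ne_zero.mpr hqp.ne']
    ring
  · intro l
    field_simp [(hFpos l).ne', (hFpos (l + 1)).ne']
    rw [show l + 1 + 1 = l + 2 by rfl, hFrec]
    push_cast
    ring

theorem stmt7_general (m : ℕ)
    (T : Matrix (Fin (m + 1)) (Fin (m + 1)) ℝ)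
    (hT : ∀ l j : Fin (m + 1),
      T l j =
        if l = j then
          (if (l : ℕ) = m then ((m : ℝ) + 1) ^ 2 else ((l : ℕ) + 1 : ℝ) * ((m : ℝ) + 1))
        else if (j : ℕ) = (l : ℕ) + 1 then ((l : ℕ) + 1 : ℝ) * ((l : ℕ) + 2 : ℝ)
        else if (l : ℕ) = (j : ℕ) + 1 then (m : ℝ) * ((m : ℝ) + 2) / 4
        else 0) :
    IsUnit T := by
  have hq : (0 : ℝ) ≤ m / 2 := by positivity
  have hqp : (m : ℝ) / 2 < (m + 2) / 2 := by linarith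
  have hT' : T = tridiagonal (m + 1) (fun l : ℕ => ((l : ℝ) + 1) * ((m + 2) / 2 + m / 2))
      (fun _ => (m + 2) / 2 * (m / 2)) (fun l : ℕ => ((l : ℝ) + 1) * (l + 2)) := by
    ext l j
    rw [hT]
    simp only [tridiagonal, of_apply, Fin.ext_iff]
    split_ifs with _ hlm
    · rw [hlm]; ring
    all_goals ring
  rw [isUnit_iff_isUnit_det, isUnit_iff_ne_zero, hT', det_tridiagonal_eq hq hqp]
  have hpow : ((m : ℝ) / 2) ^ (m + 1 + 1) < ((m + 2) / 2) ^ (m + 1 + 1) :=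
    pow_lt_pow_left₀ hqp hq (by omega)
  exact (div_pos (mul_pos (by positivity) (sub_pos.mpr hpow)) (sub_pos.mpr hqp)).ne'

/-- For every integer `m ≥ 1`, the `(m+1)×(m+1)` tridiagonal matrix `Tᵐ`
with diagonal `(l+1)(m+1)` for `0 ≤ l ≤ m−1` and `(m+1)²` in position `(m,m)`,
superdiagonal `(l+1)(l+2)`, and subdiagonal `m(m+2)/4`, is invertible. -/
theorem stmt7 (m : ℕ) (hm : 1 ≤ m)
    (T : Matrix (Fin (m + 1)) (Fin (m + 1)) ℝ)
    (hT : ∀ l j : Fin (m + 1),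
      T l j =
        if l = j then
          (if (l : ℕ) = m then ((m : ℝ) + 1) ^ 2 else ((l : ℕ) + 1 : ℝ) * ((m : ℝ) + 1))
        else if (j : ℕ) = (l : ℕ) + 1 then ((l : ℕ) + 1 : ℝ) * ((l : ℕ) + 2 : ℝ)
        else if (l : ℕ) = (j : ℕ) + 1 then (m : ℝ) * ((m : ℝ) + 2) / 4
        else 0) :
    IsUnit T :=
  stmt7_general m T hT
end

section
/- Let γ ≤ 1, 0 < α < min{2/(2−γ), 1}, λ, Λ > 0 with λ ≤ Λ, and set K = ( (λ/(2Λ))·(1 − (2−γ)α/2) )^{2/(2−γ)}. Then K ∈ (0,1), and for any constant C > 0 and any measurable functions a^{nn}, b^n, c on (0,K) with λ ≤ a^{nn} ≤ Λ, |b^n| ≤ Λ, c ≤ 0, the function w(z) = C z^{(2−γ)α/2} satisfies, for all z ∈ (0,K): ((2−γ)α/2)·((2−γ)α/2 − 1)·a^{nn}(z)·z^{(2−γ)(α−2)/2} + ((2−γ)α/2)·b^n(z)·z^{(2−γ)(α−1)/2} + c(z)·z^{(2−γ)α/2} ≤ (C(2−γ)αλ/4)·((2−γ)α/2 − 1)·z^{(2−γ)(α−2)/2}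 < 0. -/
open Set

/-! With `β = (2 - γ) α / 2 ∈ (0, 1)` and `w = C z ^ β`, the three terms of the operator
factor as `C z ^ (β - (2 - γ)) * (β (β - 1) a + β b z ^ ((2 - γ) / 2) + c z ^ (2 - γ))`.
The second-order coefficient `β (β - 1) a ≤ β (β - 1) λ` is negative, and `K` is chosen so
that `z ^ ((2 - γ) / 2) < λ (1 - β) / (2 Λ)` on `(0, K)`: the drift term then eats at most
half of it. -/

lemma div_two_mul_one_sub_mem_Ioo {lam Lam β : ℝ} (hlam : 0 < lam) (hlamLam : lam ≤ Lam)
    (hβ0 : 0 ≤ β) (hβ1 : β < 1) :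
    lam / (2 * Lam) * (1 - β) ∈ Ioo 0 1 := by
  have hLam : 0 < Lam := hlam.trans_le hlamLam
  have hratio : lam / (2 * Lam) ≤ 1 / 2 := by
    rw [div_le_iff₀ (by positivity)]
    linarith
  constructor
  · exact mul_pos (by positivity) (by linarith)
  · nlinarith [div_pos hlam (by positivity : (0 : ℝ) < 2 * Lam)]

lemma rpow_div_two_lt_of_lt_rpow_two_div {z b s : ℝ} (hz : 0 ≤ z) (hb : 0 ≤ b) (hs : 0 < s)
    (h : z < b ^ (2 / s)) : z ^ (s / 2) < b := by
  rw [← inv_div] at h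
  exact (Real.lt_rpow_inv_iff_of_pos hz hb (by positivity)).mp h

lemma barrier_coeff_le {lam Lam β a b c q r : ℝ} (hLam : 0 < Lam)
    (hβ0 : 0 ≤ β) (hβ1 : β ≤ 1)
    (ha : lam ≤ a) (hb : |b| ≤ Lam) (hc : c ≤ 0) (hq0 : 0 ≤ q)
    (hq : q ≤ lam / (2 * Lam) * (1 - β)) (hr : 0 ≤ r) :
    β * (β - 1) * a + β * b * q + c * r ≤ β * lam / 2 * (β - 1) := by
  have hsecond : β * (β - 1) * a ≤ β * (β - 1) * lam :=
    mul_le_mul_of_nonpos_left ha (mul_nonpos_of_nonneg_of_nonpos hβ0 (by linarith))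
  have hdrift : β * b * q ≤ β * lam * (1 - β) / 2 :=
    calc β * b * q ≤ β * Lam * q := by
          gcongr
          exact (le_abs_self b).trans hb
      _ ≤ β * Lam * (lam / (2 * Lam) * (1 - β)) := by gcongr
      _ = β * lam * (1 - β) / 2 := by field_simp
  have hzeroth : c * r ≤ 0 := mul_nonpos_of_nonpos_of_nonneg hc hr
  linarith

lemma barrier_operator_le {s α lam Lam C a b c z : ℝ} (hz : 0 < z) (hC : 0 ≤ C)
    (hLam : 0 < Lam)
    (hβ0 : 0 ≤ s * α / 2) (hβ1 : s * α / 2 ≤ 1)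
    (ha : lam ≤ a) (hb : |b| ≤ Lam) (hc : c ≤ 0)
    (hzK : z ^ (s / 2) ≤ lam / (2 * Lam) * (1 - s * α / 2)) :
    C * ((s * α / 2) * (s * α / 2 - 1) * a * z ^ (s * (α - 2) / 2)
        + (s * α / 2) * b * z ^ (s * (α - 1) / 2) + c * z ^ (s * α / 2))
      ≤ (C * s * α * lam / 4) * (s * α / 2 - 1) * z ^ (s * (α - 2) / 2) := by
  have hdrift_pow : z ^ (s * (α - 1) / 2) = z ^ (s * (α - 2) / 2) * z ^ (s / 2) := by
    rw [← Real.rpow_add hz]; ring_nf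
  have hzeroth_pow : z ^ (s * α / 2) = z ^ (s * (α - 2) / 2) * z ^ s := by
    rw [← Real.rpow_add hz]; ring_nf
  have hcoeff := barrier_coeff_le hLam hβ0 hβ1 ha hb hc (Real.rpow_nonneg hz.le _) hzK
    (Real.rpow_nonneg hz.le s)
  calc _ = C * z ^ (s * (α - 2) / 2) * ((s * α / 2) * (s * α / 2 - 1) * a
          + (s * α / 2) * b * z ^ (s / 2) + c * z ^ s) := by
        rw [hdrift_pow, hzeroth_pow]; ring
    _ ≤ C * z ^ (s * (α - 2) / 2) * ((s * α / 2) * lam / 2 * (s * α / 2 - 1)) := by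
        gcongr
    _ = _ := by ring

/-- one-dimensional supersolution barrier: with
`K = ((λ/(2Λ))(1 − (2−γ)α/2))^(2/(2−γ))` one has `K ∈ (0,1)`, and for any `C > 0`
and coefficients `λ ≤ aⁿⁿ ≤ Λ`, `|bⁿ| ≤ Λ`, `c ≤ 0` on `(0,K)`, the function
`w(z) = C z^((2−γ)α/2)` satisfies the stated strictly negative supersolution inequality. -/
theorem stmt12 (γ α lam Lam : ℝ) (hγ : γ ≤ 1)
    (hα0 : 0 < α) (hα : α < min (2 / (2 - γ)) 1)
    (hlam : 0 < lam) (hlamLam : lam ≤ Lam)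
    (K : ℝ) (hK : K = ((lam / (2 * Lam)) * (1 - (2 - γ) * α / 2)) ^ (2 / (2 - γ))) :
    (0 < K ∧ K < 1) ∧
    ∀ C : ℝ, 0 < C → ∀ a b c : ℝ → ℝ,
      (∀ z ∈ Ioo (0:ℝ) K, lam ≤ a z ∧ a z ≤ Lam ∧ |b z| ≤ Lam ∧ c z ≤ 0) →
      ∀ z ∈ Ioo (0:ℝ) K,
        C * (((2 - γ) * α / 2) * ((2 - γ) * α / 2 - 1) * a z * z ^ ((2 - γ) * (α - 2) / 2)
            + ((2 - γ) * α / 2) * b z * z ^ ((2 - γ) * (α - 1) / 2)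
            + c z * z ^ ((2 - γ) * α / 2))
          ≤ (C * (2 - γ) * α * lam / 4) * ((2 - γ) * α / 2 - 1) * z ^ ((2 - γ) * (α - 2) / 2)
        ∧ (C * (2 - γ) * α * lam / 4) * ((2 - γ) * α / 2 - 1) * z ^ ((2 - γ) * (α - 2) / 2)
            < 0 := by
  have hs : 0 < 2 - γ := by linarith
  have hβ0 : 0 < (2 - γ) * α / 2 := by positivity
  have hβ1 : (2 - γ) * α / 2 < 1 := by
    have := (lt_div_iff₀ hs).mp (hα.trans_le (min_le_left _ _))
    linarith
  obtain ⟨hbase0, hbase1⟩ := div_two_mul_one_sub_mem_Ioo hlam hlamLam hβ0.le hβ1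
  refine ⟨⟨hK ▸ Real.rpow_pos_of_pos hbase0 _,
      hK ▸ Real.rpow_lt_one hbase0.le hbase1 (by positivity)⟩,
    fun C hC a b c hcoeff z hz => ⟨?_, ?_⟩⟩
  · obtain ⟨ha, -, hb, hc⟩ := hcoeff z hz
    exact barrier_operator_le hz.1 hC.le (hlam.trans_le hlamLam) hβ0.le hβ1.le ha hb hc
      (rpow_div_two_lt_of_lt_rpow_two_div hz.1.le hbase0.le hs (hK ▸ hz.2)).le
  · exact mul_neg_of_neg_of_pos (mul_neg_of_pos_of_neg (by positivity) (by linarith))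
      (Real.rpow_pos_of_pos hz.1 _)
end
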